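/- Let A be a unital C*-algebra. There exists a unital *-homomorphism from M₃(ℂ) ⊕ M₂(ℂ) into A if and only if A contains projections e and e' such that e·e' = 0, e ∼ e' (Murray–von Neumann equivalence), and 1 − e − e' ≾ e (Murray–von Neumann subequivalence). -/

import Mathlib

/-- A projection in a C*-algebra: a self-adjoint idempotent. -/
def IsProjection {A : Type*} [Ring A] [StarRing A] (p : A) : Prop :=
  IsSelfAdjoint p ∧ p * p = p

/-- Murray–von Neumann equivalence of projections. -/
def MvNEquiv {A : Type*} [Ring A] [StarRing A] (p q : A) : Prop :=
  ∃ v : A, star v * v = p ∧ v * star v = q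

/-- Murray–von Neumann subequivalence: `p` is equivalent to a subprojection of `q`. -/
def MvNSubequiv {A : Type*} [Ring A] [StarRing A] (p q : A) : Prop :=
  ∃ r : A, IsProjection r ∧ r = q * r ∧ r = r * q ∧ MvNEquiv p r

/-!
A unital *-homomorphism `M₃ ⊕ M₂ → A` amounts to a system of matrix units in `A`. In `M₃ ⊕ M₂`
itself, `e = E₁₁ ⊕ E₁₁` and `e' = E₂₂ ⊕ E₂₂` work, since `1 - e - e' = E₃₃ ⊕ 0 ∼ E₁₁ ⊕ 0 ≤ e`,
and these relations are preserved by *-homomorphisms. Conversely, let `v : e ∼ e'` and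
`w : f ∼ r ≤ e`, where `f = 1 - e - e'`. The partial isometries `s = (f, w, v w)` with source `f`
and `t = (e - r, v (e - r))` with source `e - r` have mutually orthogonal ranges
`f, r, v r v⋆, e - r, v (e - r) v⋆`, which add up to `f + e + e' = 1`; hence `sᵢ sⱼ⋆` and `tᵢ tⱼ⋆`
are matrix units for `M₃` and `M₂`. The C⋆-identity is used only to see that `v` and `w` are
partial isometries: `x⋆ x = p` for a projection `p` forces `x p = x`.
-/

open Matrix

section Projections

variable {A B : Type*} [Ring A] [StarRing A] [Ring B] [StarRing B]

theorem isProjection_iff_isStarProjection {p : A} : IsProjection p ↔ IsStarProjection p := by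
  rw [isStarProjection_iff, IsProjection, IsIdempotentElem, and_comm]

theorem MvNEquiv.mvnSubequiv {p q : A} (h : MvNEquiv p q) (hq : IsProjection q) :
    MvNSubequiv p q :=
  ⟨q, hq, hq.2.symm, hq.2.symm, h⟩

theorem mvnSubequiv_zero_left (q : A) : MvNSubequiv 0 q :=
  ⟨0, ⟨.zero _, mul_zero 0⟩, (mul_zero q).symm, (zero_mul q).symm, 0, by simp, by simp⟩

theorem IsProjection.prodMk {p : A} {q : B} (hp : IsProjection p) (hq : IsProjection q) :
    IsProjection (p, q) :=
  ⟨Prod.ext hp.1.star_eq hq.1.star_eq, Prod.ext hp.2 hq.2⟩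

theorem MvNEquiv.prodMk {p q : A} {p' q' : B} (h : MvNEquiv p q) (h' : MvNEquiv p' q') :
    MvNEquiv (p, p') (q, q') := by
  obtain ⟨v, hv, hv'⟩ := h
  obtain ⟨u, hu, hu'⟩ := h'
  exact ⟨(v, u), Prod.ext hv hu, Prod.ext hv' hu'⟩

theorem MvNSubequiv.prodMk {p q : A} {p' q' : B} (h : MvNSubequiv p q) (h' : MvNSubequiv p' q') :
    MvNSubequiv (p, p') (q, q') := by
  obtain ⟨r, hr, hqr, hrq, hpr⟩ := h
  obtain ⟨r', hr', hqr', hrq', hpr'⟩ := h'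
  exact ⟨(r, r'), hr.prodMk hr', Prod.ext hqr hqr', Prod.ext hrq hrq', hpr.prodMk hpr'⟩

variable {F : Type*} [FunLike F A B] [MulHomClass F A B] [StarHomClass F A B] (φ : F)

theorem IsProjection.map {p : A} (hp : IsProjection p) : IsProjection (φ p) :=
  isProjection_iff_isStarProjection.2 ((isProjection_iff_isStarProjection.1 hp).map φ)

theorem MvNEquiv.map {p q : A} (h : MvNEquiv p q) : MvNEquiv (φ p) (φ q) := by
  obtain ⟨v, hv, hv'⟩ := h
  exact ⟨φ v, by rw [← map_star, ← map_mul, hv], by rw [← map_star, ← map_mul, hv']⟩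

theorem MvNSubequiv.map {p q : A} (h : MvNSubequiv p q) : MvNSubequiv (φ p) (φ q) := by
  obtain ⟨r, hr, hqr, hrq, hpr⟩ := h
  exact ⟨φ r, hr.map φ, by rw [← map_mul, ← hqr], by rw [← map_mul, ← hrq], hpr.map φ⟩

end Projections

namespace Matrix

variable {n R : Type*} [DecidableEq n] [Ring R] [StarRing R]

theorem star_single_one (i j : n) : star (single i j (1 : R)) = single j i 1 := by
  rw [star_eq_conjTranspose, conjTranspose_single, star_one]

variable [Fintype n]

theorem isProjection_single_one (i : n) : IsProjection (single i i (1 : R)) :=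
  ⟨star_single_one i i, by rw [single_mul_single_same, one_mul]⟩

theorem mvnEquiv_single_one (i j : n) : MvNEquiv (single i i (1 : R)) (single j j 1) :=
  ⟨single j i 1, by rw [star_single_one, single_mul_single_same, one_mul],
    by rw [star_single_one, single_mul_single_same, one_mul]⟩

end Matrix

theorem exists_projections_fin_three_prod_fin_two (R : Type*) [Ring R] [StarRing R] :
    ∃ e e' : Matrix (Fin 3) (Fin 3) R × Matrix (Fin 2) (Fin 2) R, IsProjection e ∧
      IsProjection e' ∧ e * e' = 0 ∧ MvNEquiv e e' ∧ MvNSubequiv (1 - e - e') e := by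
  have h3 : (1 : Matrix (Fin 3) (Fin 3) R) - single 0 0 1 - single 1 1 1 = single 2 2 1 := by
    rw [← sum_single_one, Fin.sum_univ_three]
    abel
  have h2 : (1 : Matrix (Fin 2) (Fin 2) R) - single 0 0 1 - single 1 1 1 = 0 := by
    rw [← sum_single_one, Fin.sum_univ_two]
    abel
  refine ⟨(single 0 0 1, single 0 0 1), (single 1 1 1, single 1 1 1),
    (isProjection_single_one 0).prodMk (isProjection_single_one 0),
    (isProjection_single_one 1).prodMk (isProjection_single_one 1),
    Prod.ext (by simp) (by simp),
    (mvnEquiv_single_one 0 1).prodMk (mvnEquiv_single_one 0 1), ?_⟩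
  rw [show (1 : Matrix (Fin 3) (Fin 3) R × Matrix (Fin 2) (Fin 2) R) - _ - _ = (single 2 2 1, 0)
    from Prod.ext h3 h2]
  exact ((mvnEquiv_single_one 2 0).mvnSubequiv (isProjection_single_one 0)).prodMk
    (mvnSubequiv_zero_left _)

structure IsMatrixUnits {n A : Type*} [Mul A] [Zero A] [Star A] [DecidableEq n]
    (E : n → n → A) : Prop where
  mul_eq : ∀ i j k l, E i j * E k l = if j = k then E i l else 0
  star_eq : ∀ i j, star (E i j) = E j i

namespace IsMatrixUnits

variable {R A n : Type*} [CommSemiring R] [Semiring A] [StarRing A] [Algebra R A]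
  [Fintype n] [DecidableEq n] {E : n → n → A}

theorem sum_smul_mul_sum_smul (hE : IsMatrixUnits E) (x y : Matrix n n R) :
    (∑ i, ∑ j, x i j • E i j) * (∑ k, ∑ l, y k l • E k l) = ∑ i, ∑ l, (x * y) i l • E i l :=
  calc _ = ∑ i, ∑ j, ∑ l, (x i j * y j l) • E i l := by
        simp only [Finset.sum_mul_sum, smul_mul_smul_comm, hE.mul_eq, smul_ite, smul_zero]
        refine Finset.sum_congr rfl fun i _ => ?_
        rw [Finset.sum_comm]
        simp
    _ = _ := by
        simp only [mul_apply, Finset.sum_smul]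
        exact Finset.sum_congr rfl fun i _ => Finset.sum_comm

variable [StarRing R] [StarModule R A]

variable (R) in
def toNonUnitalStarAlgHom (hE : IsMatrixUnits E) : Matrix n n R →⋆ₙₐ[R] A where
  toFun x := ∑ i, ∑ j, x i j • E i j
  map_smul' c x := by simp [Finset.smul_sum, smul_smul]
  map_zero' := by simp
  map_add' x y := by simp [add_smul, Finset.sum_add_distrib]
  map_mul' x y := (hE.sum_smul_mul_sum_smul x y).symm
  map_star' x := by
    simp only [star_sum, star_smul, star_apply, hE.star_eq]
    exact Finset.sum_comm

theorem toNonUnitalStarAlgHom_apply (hE : IsMatrixUnits E) (x : Matrix n n R) :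
    hE.toNonUnitalStarAlgHom R x = ∑ i, ∑ j, x i j • E i j := rfl

theorem toNonUnitalStarAlgHom_one (hE : IsMatrixUnits E) :
    hE.toNonUnitalStarAlgHom R 1 = ∑ i, E i i := by
  simp [toNonUnitalStarAlgHom_apply, one_apply]

end IsMatrixUnits

namespace NonUnitalStarAlgHom

variable {R A B C : Type*} [CommSemiring R] [Semiring A] [StarRing A] [Algebra R A]
  [Semiring B] [Star B] [Algebra R B] [Semiring C] [Star C] [Algebra R C]

def coprodOfOrthogonal (φ : B →⋆ₙₐ[R] A) (ψ : C →⋆ₙₐ[R] A) (hφψ : ∀ x y, φ x * ψ y = 0)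
    (hone : φ 1 + ψ 1 = 1) : B × C →⋆ₐ[R] A where
  toFun x := φ x.1 + ψ x.2
  map_one' := hone
  map_mul' x y := by
    have hψφ : ψ x.2 * φ y.1 = 0 := by
      rw [← star_star (ψ x.2 * φ y.1), star_mul, ← map_star, ← map_star, hφψ, star_zero]
    simp only [Prod.fst_mul, Prod.snd_mul, map_mul, add_mul, mul_add, hφψ, hψφ, add_zero, zero_add]
  map_zero' := by simp
  map_add' x y := by simp only [Prod.fst_add, Prod.snd_add, map_add]; abel
  commutes' c := by
    simp only [Algebra.algebraMap_eq_smul_one, Prod.smul_fst, Prod.smul_snd, Prod.fst_one,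
      Prod.snd_one, map_smul, ← smul_add, hone]
  map_star' x := by simp only [Prod.fst_star, Prod.snd_star, map_star, star_add]

end NonUnitalStarAlgHom

section PartialIsometries

variable {A n m : Type*} [Semiring A] [StarRing A] [DecidableEq n] [DecidableEq m]

theorem isMatrixUnits_mul_star {s : n → A} {p : A}
    (hs : ∀ i j, star (s i) * s j = if i = j then p else 0) (hsp : ∀ i, s i * p = s i) :
    IsMatrixUnits fun i j => s i * star (s j) where
  mul_eq i j k l := by
    rw [mul_assoc, ← mul_assoc (star (s j)), hs]
    split_ifs <;> simp [← mul_assoc, hsp]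
  star_eq i j := by rw [star_mul, star_star]

variable [Fintype n] [Fintype m] {R : Type*} [CommSemiring R] [StarRing R] [Algebra R A]
  [StarModule R A]

theorem nonempty_starAlgHom_prod_of_partialIsometries {s : n → A} {t : m → A} {p q : A}
    (hs : ∀ i j, star (s i) * s j = if i = j then p else 0) (hsp : ∀ i, s i * p = s i)
    (ht : ∀ i j, star (t i) * t j = if i = j then q else 0) (htq : ∀ i, t i * q = t i)
    (hst : ∀ i j, star (s i) * t j = 0)
    (hone : ∑ i, s i * star (s i) + ∑ j, t j * star (t j) = 1) :
    Nonempty (Matrix n n R × Matrix m m R →⋆ₐ[R] A) := by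
  have hE := isMatrixUnits_mul_star hs hsp
  have hF := isMatrixUnits_mul_star ht htq
  refine ⟨(hE.toNonUnitalStarAlgHom R).coprodOfOrthogonal (hF.toNonUnitalStarAlgHom R)
    (fun x y => ?_) (by rw [hE.toNonUnitalStarAlgHom_one, hF.toNonUnitalStarAlgHom_one, hone])⟩
  have horth : ∀ i j k l, s i * star (s j) * (t k * star (t l)) = 0 := fun i j k l => by
    rw [mul_assoc, ← mul_assoc (star (s j)), hst, zero_mul, mul_zero]
  simp [IsMatrixUnits.toNonUnitalStarAlgHom_apply, Finset.sum_mul_sum, horth]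

end PartialIsometries

namespace CStarRing

variable {A : Type*} [NonUnitalNormedRing A] [StarRing A] [CStarRing A] {x p : A}

theorem mul_eq_left_of_star_mul_self_eq (h : star x * x = p) (hp : IsIdempotentElem p) :
    x * p = x := by
  have hp_sa : star p = p := by rw [← h, star_mul, star_star]
  have : star (x * p - x) * (x * p - x) = 0 := by
    rw [star_sub, star_mul, hp_sa]
    calc (p * star x - star x) * (x * p - x)
        = p * (star x * x) * p - p * (star x * x) - star x * x * p + star x * x := by noncomm_ring
      _ = 0 := by rw [h, hp.eq, hp.eq, sub_self, zero_sub, neg_add_cancel]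
  exact sub_eq_zero.mp ((star_mul_self_eq_zero_iff _).mp this)

end CStarRing

theorem nonempty_starAlgHom_fin_three_prod_fin_two_of_partialIsometries {R A : Type*}
    [CommSemiring R] [StarRing R] [Ring A] [StarRing A] [Algebra R A] [StarModule R A]
    {e e' r v w : A} (he : IsStarProjection e) (he' : IsStarProjection e') (hee' : e * e' = 0)
    (hr : IsStarProjection r) (her : e * r = r) (hvv : star v * v = e) (hvv' : v * star v = e')
    (hve : v * e = v) (hww : star w * w = 1 - e - e') (hww' : w * star w = r)
    (hwf : w * (1 - e - e') = w) :
    Nonempty (Matrix (Fin 3) (Fin 3) R × Matrix (Fin 2) (Fin 2) R →⋆ₐ[R] A) := by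
  have hstar : ∀ {a b : A}, a * b = 0 → star b * star a = 0 := fun h => by
    rw [← star_mul, h, star_zero]
  have hf : IsStarProjection (1 - e - e') := sub_sub (1 : A) e e' ▸ (he.add he' hee').one_sub
  have hx : IsStarProjection (e - r) := hr.sub_of_mul_eq_right he her
  have hfe : (1 - e - e') * e = 0 := by
    simp [sub_mul, he.isIdempotentElem.eq,
      by simpa [he.isSelfAdjoint.star_eq, he'.isSelfAdjoint.star_eq] using hstar hee']
  have hfe' : (1 - e - e') * e' = 0 := by simp [sub_mul, he'.isIdempotentElem.eq, hee']
  have hex : e * (e - r) = e - r := by rw [mul_sub, he.isIdempotentElem.eq, her]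
  have hrx : r * (e - r) = 0 := by
    rw [mul_sub, hr.isIdempotentElem.eq, sub_eq_zero]
    simpa [he.isSelfAdjoint.star_eq, hr.isSelfAdjoint.star_eq] using congrArg star her
  set f := 1 - e - e' with hf_def
  set x := e - r with hx_def
  have hf_sa : star f = f := hf.isSelfAdjoint.star_eq
  have hx_sa : star x = x := hx.isSelfAdjoint.star_eq
  have he'v : e' * v = v := by rw [← hvv', mul_assoc, hvv, hve]
  have hrw : r * w = w := by rw [← hww', mul_assoc, hww, hwf]
  have hew : e * w = w := by rw [← hrw, ← mul_assoc, her]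
  have hev : e * v = 0 := by rw [← he'v, ← mul_assoc, hee', zero_mul]
  have hv'e : star v * e = 0 := by simpa [he.isSelfAdjoint.star_eq] using hstar hev
  have hfw : f * w = 0 := by rw [← hew, ← mul_assoc, hfe, zero_mul]
  have hfv : f * v = 0 := by rw [← he'v, ← mul_assoc, hfe', zero_mul]
  have hfx : f * x = 0 := by rw [← hex, ← mul_assoc, hfe, zero_mul]
  have hv'w : star v * w = 0 := by rw [← hew, ← mul_assoc, hv'e, zero_mul]
  have hv'x : star v * x = 0 := by rw [← hex, ← mul_assoc, hv'e, zero_mul]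
  have hw'x : star w * x = 0 := by
    rw [← hrw, star_mul, hr.isSelfAdjoint.star_eq, mul_assoc, hrx, mul_zero]
  have hw'f : star w * f = 0 := by simpa [hf_sa] using hstar hfw
  have hv'f : star v * f = 0 := by simpa [hf_sa] using hstar hfv
  have hw'v : star w * v = 0 := by simpa using hstar hv'w
  have hxv : x * v = 0 := by simpa [hx_sa] using hstar hv'x
  have hone : ∑ i, ![f, w, v * w] i * star (![f, w, v * w] i) +
      ∑ j, ![x, v * x] j * star (![x, v * x] j) = 1 :=
    calc _ = f * f + w * star w + v * (w * star w) * star v + (x * x + v * (x * x) * star v) := by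
          simp [Fin.sum_univ_three, Fin.sum_univ_two, star_mul, hf_sa, hx_sa, mul_assoc]
      _ = f + e + v * e * star v := by
          rw [hww', hf.isIdempotentElem.eq, hx.isIdempotentElem.eq, hx_def]
          noncomm_ring
      _ = 1 := by rw [hve, hvv', hf_def]; abel
  have assoc_of_eq : ∀ {a b c : A}, a * b = c → ∀ t, a * (b * t) = c * t := fun h t => by
    rw [← mul_assoc, h]
  refine nonempty_starAlgHom_prod_of_partialIsometries (s := ![f, w, v * w])
    (t := ![x, v * x]) (p := f) (q := x) ?_ ?_ ?_ ?_ ?_ hone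
  all_goals simp [Fin.forall_fin_succ, hf_sa, hx_sa, mul_assoc, star_mul, hf.isIdempotentElem.eq,
    hx.isIdempotentElem.eq, hww, hwf, hew, hex, hfw, hfx, hw'f, hw'x, hv'f, hv'w, hv'x,
    assoc_of_eq hvv, assoc_of_eq hfv, assoc_of_eq hw'v, assoc_of_eq hxv]

theorem nonempty_starAlgHom_fin_three_prod_fin_two_of_mvnEquiv {R A : Type*} [CommSemiring R]
    [StarRing R] [NormedRing A] [StarRing A] [CStarRing A] [Algebra R A] [StarModule R A]
    {e e' : A} (he : IsProjection e) (he' : IsProjection e') (hee' : e * e' = 0)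
    (hv : MvNEquiv e e') (hsub : MvNSubequiv (1 - e - e') e) :
    Nonempty (Matrix (Fin 3) (Fin 3) R × Matrix (Fin 2) (Fin 2) R →⋆ₐ[R] A) := by
  obtain ⟨v, hvv, hvv'⟩ := hv
  obtain ⟨r, hr, her, -, w, hww, hww'⟩ := hsub
  rw [isProjection_iff_isStarProjection] at he he' hr
  have hf : IsStarProjection (1 - e - e') := sub_sub (1 : A) e e' ▸ (he.add he' hee').one_sub
  exact nonempty_starAlgHom_fin_three_prod_fin_two_of_partialIsometries he he' hee' hr her.symm
    hvv hvv' (CStarRing.mul_eq_left_of_star_mul_self_eq hvv he.isIdempotentElem) hww hww'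
    (CStarRing.mul_eq_left_of_star_mul_self_eq hww hf.isIdempotentElem)

theorem unital_hom_from_M3_oplus_M2_iff_general
    {A : Type*} [NormedRing A] [StarRing A] [CStarRing A]
    [NormedAlgebra ℂ A] [StarModule ℂ A] :
    Nonempty ((Matrix (Fin 3) (Fin 3) ℂ × Matrix (Fin 2) (Fin 2) ℂ) →⋆ₐ[ℂ] A) ↔
      ∃ e e' : A, IsProjection e ∧ IsProjection e' ∧ e * e' = 0 ∧
        MvNEquiv e e' ∧ MvNSubequiv (1 - e - e') e := by
  constructor
  · rintro ⟨φ⟩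
    obtain ⟨e, e', he, he', hee', hv, hsub⟩ := exists_projections_fin_three_prod_fin_two ℂ
    refine ⟨φ e, φ e', he.map φ, he'.map φ, by rw [← map_mul, hee', map_zero], hv.map φ, ?_⟩
    simpa only [map_sub, map_one] using hsub.map φ
  · rintro ⟨e, e', he, he', hee', hv, hsub⟩
    exact nonempty_starAlgHom_fin_three_prod_fin_two_of_mvnEquiv he he' hee' hv hsub

/-- There is a unital *-homomorphism from `M₃(ℂ) ⊕ M₂(ℂ)` into a unital
C*-algebra `A` if and only if `A` contains projections `e, e'` with `e ⊥ e'`, `e ∼ e'`,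
and `1 - e - e' ≾ e`. -/
theorem unital_hom_from_M3_oplus_M2_iff
    {A : Type*} [NormedRing A] [StarRing A] [CStarRing A] [CompleteSpace A]
    [NormedAlgebra ℂ A] [StarModule ℂ A] :
    Nonempty ((Matrix (Fin 3) (Fin 3) ℂ × Matrix (Fin 2) (Fin 2) ℂ) →⋆ₐ[ℂ] A) ↔
      ∃ e e' : A, IsProjection e ∧ IsProjection e' ∧ e * e' = 0 ∧
        MvNEquiv e e' ∧ MvNSubequiv (1 - e - e') e :=
  unital_hom_from_M3_oplus_M2_iff_general
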